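/- Let M be an S-manifold and let ∇̃ be the semi-symmetric non-metric connection ∇̃_X Y = ∇_X Y + Σ_{j=1}^s η^j(Y)X, where ∇ is the Riemannian connection. Then for any unit vector field X ∈ L and any α = 1,…,s, the curvature tensor R̃ of ∇̃ satisfies R̃(ξ_α, X, X, ξ_α) = 1 while R̃(X, ξ_α, ξ_α, X) = 2; hence the sectional curvature of ∇̃ is not well defined on planes containing a structure vector field. -/

import Mathlib

/-!
An algebraic model of a `(2n+s)`-dimensional `S`-manifold.  The type `V` models
the space of (local, adapted) vector fields; `g` is the Riemannian metric,
`bracket` the Lie bracket of vector fields, `f` the `(1,1)`-tensor field of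
rank `2n`, `ξ` the structure vector fields with dual `1`-forms `η`, and
`nabla` the Riemannian (Levi-Civita) connection of `g`.  Scalar products of
the adapted vector fields are modelled by real numbers, so the exterior
derivative of a `1`-form `ω` is given by `dω(X,Y) = -(1/2) ω([X,Y])`
(Blair's convention, with the factor `1/2`).  The field `frame` is an adapted
(local) orthonormal frame `{e_1, …, e_{2n}, ξ_1, …, ξ_s}` exhibiting the
dimension `2n+s` and the rank `2n` of `f`.
-/
structure SManifold (n s : ℕ) where
  /-- the space of (adapted) vector fields -/
  V : Type
  [instAddCommGroup : AddCommGroup V]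
  [instModule : Module ℝ V]
  /-- the Riemannian metric -/
  g : V →ₗ[ℝ] V →ₗ[ℝ] ℝ
  g_symm : ∀ X Y : V, g X Y = g Y X
  g_pos : ∀ X : V, X ≠ 0 → 0 < g X X
  /-- the Lie bracket of vector fields -/
  bracket : V →ₗ[ℝ] V →ₗ[ℝ] V
  bracket_skew : ∀ X Y : V, bracket X Y = - bracket Y X
  jacobi : ∀ X Y Z : V,
    bracket X (bracket Y Z) + bracket Y (bracket Z X) + bracket Z (bracket X Y) = 0
  /-- the `(1,1)`-tensor field `f` -/
  f : V →ₗ[ℝ] V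
  /-- the structure vector fields `ξ_1, …, ξ_s` -/
  ξ : Fin s → V
  /-- the dual `1`-forms `η^1, …, η^s` -/
  η : Fin s → V →ₗ[ℝ] ℝ
  /-- `f² = -I + Σ_α η^α ⊗ ξ_α` -/
  f_sq : ∀ X : V, f (f X) = -X + ∑ a : Fin s, η a X • ξ a
  /-- `η^α(ξ_β) = δ_{αβ}` -/
  eta_xi : ∀ a b : Fin s, η a (ξ b) = if a = b then (1 : ℝ) else 0
  /-- `fξ_α = 0` -/
  f_xi : ∀ a : Fin s, f (ξ a) = 0
  /-- `η^α ∘ f = 0` -/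
  eta_f : ∀ (a : Fin s) (X : V), η a (f X) = 0
  /-- `g(fX, fY) = g(X,Y) - Σ_α η^α(X) η^α(Y)` -/
  g_ff : ∀ X Y : V, g (f X) (f Y) = g X Y - ∑ a : Fin s, η a X * η a Y
  /-- `η^α(X) = g(X, ξ_α)` -/
  eta_eq_g : ∀ (a : Fin s) (X : V), η a X = g X (ξ a)
  /-- `g(X, fY) = -g(fX, Y)` -/
  g_skew_f : ∀ X Y : V, g X (f Y) = - g (f X) Y
  /-- the Riemannian (Levi-Civita) connection of `g` -/
  nabla : V →ₗ[ℝ] V →ₗ[ℝ] V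
  /-- `∇ g = 0` (scalar products of adapted fields being constant) -/
  nabla_metric : ∀ X Y Z : V, g (nabla X Y) Z + g Y (nabla X Z) = 0
  /-- `∇` is torsion-free -/
  nabla_torsion_free : ∀ X Y : V, nabla X Y - nabla Y X = bracket X Y
  /-- normality: `[f,f] + 2 Σ_α dη^α ⊗ ξ_α = 0`, where `2dη^α(X,Y) = -η^α([X,Y])` -/
  normal : ∀ X Y : V,
    f (f (bracket X Y)) + bracket (f X) (f Y)
      - f (bracket (f X) Y) - f (bracket X (f Y))
      - ∑ a : Fin s, η a (bracket X Y) • ξ a = 0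
  /-- `Φ = dη^α` for every `α`, i.e. `g(X, fY) = -(1/2) η^α([X,Y])` -/
  Phi_eq_deta : ∀ (a : Fin s) (X Y : V), g X (f Y) = -(1/2) * η a (bracket X Y)
  /-- an adapted (local) orthonormal frame `{e_1, …, e_{2n}, ξ_1, …, ξ_s}` -/
  frame : Fin (2 * n + s) → V
  frame_orthonormal : ∀ i j : Fin (2 * n + s),
    g (frame i) (frame j) = if i = j then (1 : ℝ) else 0
  frame_spans : Submodule.span ℝ (Set.range frame) = ⊤
  /-- the first `2n` frame fields lie in the distribution `L` -/
  frame_L : ∀ i : Fin (2 * n + s), (i : ℕ) < 2 * n → ∀ a : Fin s, η a (frame i) = 0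
  /-- the last `s` frame fields are the structure vector fields -/
  frame_xi : ∀ a : Fin s,
    frame ⟨2 * n + (a : ℕ), Nat.add_lt_add_left a.isLt (2 * n)⟩ = ξ a

attribute [instance] SManifold.instAddCommGroup SManifold.instModule

namespace SManifold

variable {n s : ℕ} (M : SManifold n s)

/-- the Riemannian connection, as a plain binary operation on vector fields -/
def nablaF : M.V → M.V → M.V := fun X Y => M.nabla X Y

/-- the curvature operator `R(X,Y)Z = D_X D_Y Z - D_Y D_X Z - D_{[X,Y]} Z`
of a linear connection `D` -/
def curv (D : M.V → M.V → M.V) (X Y Z : M.V) : M.V :=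
  D X (D Y Z) - D Y (D X Z) - D (M.bracket X Y) Z

/-- the `(0,4)`-curvature tensor `R(X,Y,Z,W) = g(R(X,Y)Z, W)` of a connection `D` -/
def quad (D : M.V → M.V → M.V) (X Y Z W : M.V) : ℝ :=
  M.g (M.curv D X Y Z) W

/-- the sectional curvature `K(X,Y) = R(X,Y,Y,X) / (g(X,X)g(Y,Y) - g(X,Y)²)`
of the plane section spanned by `X` and `Y`, with respect to a connection `D` -/
noncomputable def sec (D : M.V → M.V → M.V) (X Y : M.V) : ℝ :=
  M.quad D X Y Y X / (M.g X X * M.g Y Y - (M.g X Y) ^ 2)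

/-- membership in the distribution `L` orthogonal to `ξ_1, …, ξ_s` -/
def inL (X : M.V) : Prop := ∀ a : Fin s, M.η a X = 0

/-- `X`, `Y` are orthonormal vector fields -/
def onPair (X Y : M.V) : Prop := M.g X X = 1 ∧ M.g Y Y = 1 ∧ M.g X Y = 0

/-- the connection `D` has constant sectional curvature `c` -/
def constSec (D : M.V → M.V → M.V) (c : ℝ) : Prop :=
  ∀ X Y : M.V, M.onPair X Y → M.sec D X Y = c

/-- the connection `D` has constant `L`-sectional curvature `c`: the sectional
curvature of every plane section spanned by vector fields of `L` equals `c` -/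
def constLSec (D : M.V → M.V → M.V) (c : ℝ) : Prop :=
  ∀ X Y : M.V, M.inL X → M.inL Y → M.onPair X Y → M.sec D X Y = c

/-- `M` is an `S`-space-form of constant `f`-sectional curvature `c`: every
`f`-section, i.e. plane spanned by a unit `X ∈ L` and `fX`, has curvature `c`
with respect to the Riemannian connection -/
def constFSec (c : ℝ) : Prop :=
  ∀ X : M.V, M.inL X → M.g X X = 1 → M.sec M.nablaF X (M.f X) = c

/-- the scalar curvature `τ = (1/2) Σ_{i,j} K(e_i,e_j)` of a connection `D`,
computed from `R(e_i,e_j,e_j,e_i)` in the adapted orthonormal frame -/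
noncomputable def scalar (D : M.V → M.V → M.V) : ℝ :=
  (1 / 2) * ∑ i : Fin (2 * n + s), ∑ j : Fin (2 * n + s),
    M.quad D (M.frame i) (M.frame j) (M.frame j) (M.frame i)

/-- the semi-symmetric metric connection
`∇*_X Y = ∇_X Y + Σ_j η^j(Y) X - Σ_j g(X,Y) ξ_j` -/
def ssMetric (X Y : M.V) : M.V :=
  M.nabla X Y + (∑ j : Fin s, M.η j Y • X) - ∑ j : Fin s, M.g X Y • M.ξ j

/-- the semi-symmetric non-metric connection `∇̃_X Y = ∇_X Y + Σ_j η^j(Y) X` -/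
def ssNonMetric (X Y : M.V) : M.V :=
  M.nabla X Y + ∑ j : Fin s, M.η j Y • X

end SManifold

/-!
On an `S`-manifold `∇ξ_α = -f`: normality makes `ξ_α` a Killing field, so `∇ξ_α` is skew and
hence equal to its skew part `dη^α = Φ`. Writing `∇̃_X Y = ∇_X Y + π(Y) X` with `π = Σ_j η^j`,
torsion-freeness of `∇` gives
`R̃(X,Y)Z = R(X,Y)Z + π(∇_Y Z) X - π(∇_X Z) Y + π(Z) (π(Y) X - π(X) Y)`.
For a unit `X ∈ L` the Riemannian terms are `R(ξ_α,X,X,ξ_α) = R(X,ξ_α,ξ_α,X) = g(fX,fX) = 1`;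
the correction vanishes on `(ξ_α,X,X,ξ_α)` but equals `π(ξ_α)² g(X,X) = 1` on `(X,ξ_α,ξ_α,X)`.
-/

namespace SManifold

variable {n s : ℕ} (M : SManifold n s)

lemma eta_bracket (a : Fin s) (X Y : M.V) :
    M.η a (M.bracket X Y) = -2 * M.g X (M.f Y) := by
  linarith [M.Phi_eq_deta a X Y]

lemma g_f_self (X : M.V) : M.g (M.f X) X = 0 := by
  linarith [M.g_skew_f X X, M.g_symm (M.f X) X]

lemma g_xi_f (a : Fin s) (Y : M.V) : M.g (M.ξ a) (M.f Y) = 0 := by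
  rw [M.g_skew_f, M.f_xi, map_zero, LinearMap.zero_apply, neg_zero]

lemma eta_bracket_xi_right (a b : Fin s) (X : M.V) : M.η a (M.bracket X (M.ξ b)) = 0 := by
  rw [eta_bracket, M.f_xi, map_zero, mul_zero]

/-- Normality evaluated on `(X, ξ_b)`. -/
lemma f_bracket_f_xi (b : Fin s) (X : M.V) :
    M.f (M.bracket (M.f X) (M.ξ b)) = M.bracket (M.ξ b) X := by
  have h := M.normal X (M.ξ b)
  simp only [M.f_sq, M.f_xi, map_zero, eta_bracket_xi_right, zero_smul,
    Finset.sum_const_zero, add_zero, sub_zero] at h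
  rw [M.bracket_skew (M.ξ b) X]
  linear_combination (norm := module) -h

/-- `ξ_b` is a Killing vector field: the Jacobi identity for `(fX, ξ_b, Y)`, read through `η^b`. -/
lemma g_bracket_xi_skew (b : Fin s) (X Y : M.V) :
    M.g (M.bracket (M.ξ b) X) Y = - M.g (M.bracket (M.ξ b) Y) X := by
  have h := congrArg (M.η b) (M.jacobi (M.f X) (M.ξ b) Y)
  simp only [map_add, map_zero, eta_bracket, g_xi_f, f_bracket_f_xi, M.g_ff,
    mul_zero, Finset.sum_const_zero, sub_zero] at h
  linarith [M.g_symm X (M.bracket (M.ξ b) Y), M.g_symm Y (M.bracket (M.ξ b) X)]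

lemma g_nabla_xi_skew (a : Fin s) (X Y : M.V) :
    M.g (M.nabla X (M.ξ a)) Y = - M.g (M.nabla Y (M.ξ a)) X := by
  have torsion (Z : M.V) : M.nabla Z (M.ξ a) = M.nabla (M.ξ a) Z - M.bracket (M.ξ a) Z := by
    rw [← M.nabla_torsion_free]; abel
  simp only [torsion, map_sub, LinearMap.sub_apply]
  linarith [M.nabla_metric (M.ξ a) X Y, M.g_symm X (M.nabla (M.ξ a) Y),
    M.g_bracket_xi_skew a X Y]

lemma eq_of_forall_g_eq {U U' : M.V} (h : ∀ W, M.g U W = M.g U' W) : U = U' := by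
  by_contra hne
  have hpos := M.g_pos (U - U') (sub_ne_zero.mpr hne)
  simp only [map_sub, LinearMap.sub_apply, h, sub_self] at hpos
  exact lt_irrefl 0 hpos

lemma nabla_xi (a : Fin s) (X : M.V) : M.nabla X (M.ξ a) = - M.f X := by
  refine M.eq_of_forall_g_eq fun Y => ?_
  have hdη := congrArg (M.η a) (M.nabla_torsion_free X Y)
  rw [map_sub, eta_bracket, M.eta_eq_g, M.eta_eq_g] at hdη
  rw [map_neg, LinearMap.neg_apply]
  linarith [M.g_nabla_xi_skew a X Y, M.nabla_metric X Y (M.ξ a), M.nabla_metric Y X (M.ξ a),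
    M.g_symm Y (M.nabla X (M.ξ a)), M.g_symm X (M.nabla Y (M.ξ a)), M.g_skew_f X Y]

lemma eta_nabla (a : Fin s) (X Y : M.V) : M.η a (M.nabla X Y) = M.g (M.f X) Y := by
  have h := M.nabla_metric X Y (M.ξ a)
  rw [M.nabla_xi, map_neg] at h
  rw [M.eta_eq_g, M.g_symm (M.f X)]
  linarith

lemma curv_nablaF_swap (X Y Z : M.V) : M.curv M.nablaF Y X Z = - M.curv M.nablaF X Y Z := by
  simp only [curv, nablaF, M.bracket_skew Y X, map_neg, LinearMap.neg_apply]
  abel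

lemma quad_nablaF_swap_left (X Y Z W : M.V) :
    M.quad M.nablaF Y X Z W = - M.quad M.nablaF X Y Z W := by
  rw [quad, quad, curv_nablaF_swap, map_neg, LinearMap.neg_apply]

lemma quad_nablaF_swap_right (X Y Z W : M.V) :
    M.quad M.nablaF X Y W Z = - M.quad M.nablaF X Y Z W := by
  simp only [quad, curv, nablaF, map_sub, LinearMap.sub_apply]
  linarith [M.nabla_metric X (M.nabla Y Z) W, M.nabla_metric Y (M.nabla X Z) W,
    M.nabla_metric X (M.nabla Y W) Z, M.nabla_metric Y (M.nabla X W) Z,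
    M.nabla_metric (M.bracket X Y) Z W, M.g_symm (M.nabla Y Z) (M.nabla X W),
    M.g_symm (M.nabla X Z) (M.nabla Y W), M.g_symm Z (M.nabla (M.bracket X Y) W)]

lemma quad_nablaF_xi (a : Fin s) (X : M.V) :
    M.quad M.nablaF X (M.ξ a) (M.ξ a) X = M.g (M.f X) (M.f X) := by
  have hbr : M.bracket X (M.ξ a) = - M.f X - M.nabla (M.ξ a) X := by
    rw [← M.nabla_torsion_free, M.nabla_xi]
  simp only [quad, curv, nablaF, nabla_xi, hbr, M.f_xi, neg_zero, map_zero, map_neg, map_sub,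
    LinearMap.sub_apply, LinearMap.neg_apply, LinearMap.zero_apply]
  linarith [M.nabla_metric (M.ξ a) (M.f X) X, M.g_skew_f (M.nabla (M.ξ a) X) X,
    M.g_skew_f (M.f X) X, M.g_symm (M.f X) (M.nabla (M.ξ a) X)]

lemma curv_add_form_smul (π : M.V →ₗ[ℝ] ℝ) (X Y Z : M.V) :
    M.curv (fun X Y => M.nabla X Y + π Y • X) X Y Z =
      M.curv M.nablaF X Y Z + π (M.nabla Y Z) • X - π (M.nabla X Z) • Y
        + π Z • (π Y • X - π X • Y) := by
  simp only [curv, nablaF, map_add, map_smul, smul_eq_mul]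
  rw [← M.nabla_torsion_free X Y]
  module

lemma quad_add_form_smul (π : M.V →ₗ[ℝ] ℝ) (X Y Z W : M.V) :
    M.quad (fun X Y => M.nabla X Y + π Y • X) X Y Z W =
      M.quad M.nablaF X Y Z W + π (M.nabla Y Z) * M.g X W - π (M.nabla X Z) * M.g Y W
        + π Z * (π Y * M.g X W - π X * M.g Y W) := by
  simp only [quad, curv_add_form_smul, map_add, map_sub, map_smul, LinearMap.add_apply,
    LinearMap.sub_apply, LinearMap.smul_apply, smul_eq_mul]

lemma ssNonMetric_eq : M.ssNonMetric = fun X Y => M.nabla X Y + (∑ j, M.η j) Y • X := by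
  funext X Y
  simp only [ssNonMetric, LinearMap.sum_apply, Finset.sum_smul]

end SManifold

/-- Let `M` be an `S`-manifold and let `∇̃` be the semi-symmetric
non-metric connection `∇̃_X Y = ∇_X Y + Σ_j η^j(Y)X`, where `∇` is the Riemannian
connection.  Then for any unit vector field `X ∈ L` and any `α = 1,…,s`, the
curvature tensor `R̃` of `∇̃` satisfies `R̃(ξ_α, X, X, ξ_α) = 1` while
`R̃(X, ξ_α, ξ_α, X) = 2`; hence the sectional curvature of `∇̃` is not well defined
on planes containing a structure vector field. -/
theorem ssNonMetric_curvature_xi {n s : ℕ} (M : SManifold n s) :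
    ∀ X : M.V, M.inL X → M.g X X = 1 → ∀ a : Fin s,
      M.quad M.ssNonMetric (M.ξ a) X X (M.ξ a) = 1 ∧
      M.quad M.ssNonMetric X (M.ξ a) (M.ξ a) X = 2 ∧
      M.quad M.ssNonMetric (M.ξ a) X X (M.ξ a)
        ≠ M.quad M.ssNonMetric X (M.ξ a) (M.ξ a) X := by
  intro X hX hX1 a
  set π : M.V →ₗ[ℝ] ℝ := ∑ j, M.η j
  have hπX : π X = 0 := by simp [π, LinearMap.sum_apply, hX _]
  have hπξ : π (M.ξ a) = 1 := by simp [π, LinearMap.sum_apply, M.eta_xi]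
  have hπ_nabla_XX : π (M.nabla X X) = 0 := by
    simp [π, LinearMap.sum_apply, M.eta_nabla, M.g_f_self]
  have hπ_nabla_ξξ : π (M.nabla (M.ξ a) (M.ξ a)) = 0 := by
    rw [M.nabla_xi, M.f_xi, neg_zero, map_zero]
  have hXξ : M.g X (M.ξ a) = 0 := (M.eta_eq_g a X).symm.trans (hX a)
  have hR : M.quad M.nablaF X (M.ξ a) (M.ξ a) X = 1 := by
    rw [M.quad_nablaF_xi, M.g_ff, hX1]; simp [hX _]
  have hR' : M.quad M.nablaF (M.ξ a) X X (M.ξ a) = 1 := by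
    rw [M.quad_nablaF_swap_left, M.quad_nablaF_swap_right, neg_neg, hR]
  have h1 : M.quad M.ssNonMetric (M.ξ a) X X (M.ξ a) = 1 := by
    rw [M.ssNonMetric_eq, M.quad_add_form_smul, hR', hπX, hπ_nabla_XX, hXξ]; ring
  have h2 : M.quad M.ssNonMetric X (M.ξ a) (M.ξ a) X = 2 := by
    rw [M.ssNonMetric_eq, M.quad_add_form_smul, hR, hπξ, hπ_nabla_ξξ, M.g_symm (M.ξ a), hXξ, hX1]
    norm_num
  exact ⟨h1, h2, by rw [h1, h2]; norm_num⟩
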